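/- arXiv:2511.21292 — 2 statements merged into one kernel-verified Lean document; each statement's English description precedes it below -/
import Mathlib

section
/- Let $q = 2^n$ with $n \geq 2$ and let $G$ be the group of triples $(a,b,c) \in \mathbb{F}_{q^2}^3$ with $a^{q+1} = 1$, $b^{q+1} = h(c)$, under the operation $(a_2,b_2,c_2) \cdot (a_1,b_1,c_1) = (a_1 a_2, a_1 b_2 + b_1, (a_1 b_2 b_1^q)^2 + a_1 b_2 b_1^q + c_1 + c_2)$. The map $\varphi : G \to \mathbb{F}_{q^2}^*$ sending $(a,b,c) \mapsto a$ is a surjective group homomorphism onto the group of $(q+1)$-th roots of unity, and its kernel $N = \{(1,b,c) \in G\}$ is a normal subgroup of order $q^3/2$. -/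
/-!
The map `h` is additive, and `h(y)² + h(y) = y^q + y`. Its kernel consists of roots of a
polynomial of degree `q/2`, and its image of roots of `(X^q + X)(X^q + X + 1)`, of degree `2q`;
since `|ker h| · |im h| = q²`, both bounds are attained. So the image of `h` is exactly the
root set of `(X^q + X)(X^q + X + 1)`, which contains `𝔽_q`, and every norm `b^(q+1) ∈ 𝔽_q`
has exactly `q/2` preimages `c`: this gives `|N| = q² · q/2`.

Conjugating `(1, β, γ)` by `(a, b, c)` gives `(1, a⁻¹β, γ + W² + W)` with
`W = βb^q + bβ^q ∈ 𝔽_q`, and `h(W² + W) = W^q + W = 0`, so `N` is normal.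
-/

/-- The Abdón--Torres additive polynomial map `h(y) = y^(q/2) + ... + y^2 + y`. -/
noncomputable def hAT (n : ℕ) (y : GaloisField 2 (2*n)) : GaloisField 2 (2*n) :=
  ∑ i ∈ Finset.range n, y ^ (2 ^ i)

/-- Membership in the automorphism group `G`: triples `(a,b,c)` with
    `a^(q+1) = 1` and `b^(q+1) = h(c)`. -/
noncomputable def inG (n : ℕ)
    (t : GaloisField 2 (2*n) × GaloisField 2 (2*n) × GaloisField 2 (2*n)) : Prop :=
  t.1 ^ (2 ^ n + 1) = 1 ∧ t.2.1 ^ (2 ^ n + 1) = hAT n t.2.2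

/-- The group law `(a₂,b₂,c₂) ⬝ (a₁,b₁,c₁) =
    (a₁a₂, a₁b₂ + b₁, (a₁b₂b₁^q)² + a₁b₂b₁^q + c₁ + c₂)`. -/
noncomputable def mulG (n : ℕ)
    (t₂ t₁ : GaloisField 2 (2*n) × GaloisField 2 (2*n) × GaloisField 2 (2*n)) :
    GaloisField 2 (2*n) × GaloisField 2 (2*n) × GaloisField 2 (2*n) :=
  (t₁.1 * t₂.1, t₁.1 * t₂.2.1 + t₁.2.1,
    (t₁.1 * t₂.2.1 * t₁.2.1 ^ (2 ^ n)) ^ 2 + t₁.1 * t₂.2.1 * t₁.2.1 ^ (2 ^ n)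
      + t₁.2.2 + t₂.2.2)

open Polynomial Finset

local notation "𝔽" n:max => GaloisField 2 (2 * n)

namespace Polynomial

variable {R : Type*}

theorem ncard_setOf_eval_eq_zero_le [CommRing R] [IsDomain R] {p : R[X]} (hp : p ≠ 0) :
    {x | p.eval x = 0}.ncard ≤ p.natDegree := by
  convert p.ncard_rootSet_le R
  ext x
  simp [mem_rootSet_of_ne hp]

theorem natDegree_X_pow_add_X [Semiring R] [Nontrivial R] {k : ℕ} (hk : 1 < k) :
    (X ^ k + X : R[X]).natDegree = k := by
  rw [natDegree_add_eq_left_of_natDegree_lt] <;> simp [hk]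

theorem natDegree_sum_X_pow_two_pow_le [Semiring R] (n : ℕ) :
    (∑ i ∈ range n, (X : R[X]) ^ 2 ^ i).natDegree ≤ 2 ^ (n - 1) := by
  refine natDegree_sum_le_of_forall_le _ _ fun i hi => (natDegree_X_pow_le _).trans ?_
  exact Nat.pow_le_pow_right two_pos (by have := mem_range.mp hi; omega)

theorem sum_X_pow_two_pow_ne_zero [Semiring R] [Nontrivial R] {n : ℕ} (hn : n ≠ 0) :
    ∑ i ∈ range n, (X : R[X]) ^ 2 ^ i ≠ 0 := by
  intro h
  have := congrArg (coeff · 1) h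
  simp [finsetSum_coeff, coeff_X_pow, eq_comm (a := 1), Nat.pos_of_ne_zero hn] at this

end Polynomial

variable {n : ℕ}

theorem pow_two_pow_pow_two_pow (hn : n ≠ 0) (x : 𝔽 n) : (x ^ 2 ^ n) ^ 2 ^ n = x := by
  let := Fintype.ofFinite (𝔽 n)
  have hcard : Fintype.card (𝔽 n) = 2 ^ n * 2 ^ n := by
    rw [← Nat.card_eq_fintype_card, GaloisField.card 2 _ (by omega), two_mul, pow_add]
  rw [← pow_mul, ← hcard, FiniteField.pow_card]

theorem pow_two_pow_add_self_pow (hn : n ≠ 0) (x : 𝔽 n) :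
    (x ^ 2 ^ n + x) ^ 2 ^ n = x ^ 2 ^ n + x := by
  rw [add_pow_char_pow, pow_two_pow_pow_two_pow hn, add_comm]

theorem pow_two_pow_add_one_pow (hn : n ≠ 0) (b : 𝔽 n) :
    (b ^ (2 ^ n + 1)) ^ 2 ^ n = b ^ (2 ^ n + 1) := by
  rw [pow_succ, mul_pow, pow_two_pow_pow_two_pow hn, mul_comm b]

theorem hAT_add (x y : 𝔽 n) : hAT n (x + y) = hAT n x + hAT n y := by
  simp only [hAT, add_pow_char_pow, sum_add_distrib]

theorem hAT_zero : hAT n 0 = 0 := by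
  simp [hAT]

theorem hAT_sq (y : 𝔽 n) : hAT n (y ^ 2) = hAT n y ^ 2 := by
  simp only [hAT, sum_pow_char, ← pow_mul, mul_comm]

theorem hAT_sq_add_hAT (y : 𝔽 n) : hAT n y ^ 2 + hAT n y = y ^ 2 ^ n + y := by
  have h := sum_range_sub (fun i => y ^ 2 ^ i) n
  simp only [Nat.pow_succ, pow_mul, Nat.pow_zero, pow_one, CharTwo.sub_eq_add] at h
  rw [hAT, sum_pow_char, ← sum_add_distrib, h]

theorem hAT_sq_add_self (y : 𝔽 n) : hAT n (y ^ 2 + y) = y ^ 2 ^ n + y := by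
  rw [hAT_add, hAT_sq, hAT_sq_add_hAT]

theorem hAT_eq_eval (y : 𝔽 n) : hAT n y = (∑ i ∈ range n, (X : (𝔽 n)[X]) ^ 2 ^ i).eval y := by
  simp [hAT, eval_finsetSum]

noncomputable def hATHom (n : ℕ) : 𝔽 n →+ 𝔽 n := AddMonoidHom.mk' (hAT n) hAT_add

theorem card_ker_hATHom_le (hn : n ≠ 0) : Nat.card (hATHom n).ker ≤ 2 ^ (n - 1) := by
  have hker : ((hATHom n).ker : Set (𝔽 n)) = {y | (∑ i ∈ range n, X ^ 2 ^ i).eval y = 0} := by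
    ext y
    simp [hATHom, hAT_eq_eval]
  rw [← SetLike.coe_sort_coe, Nat.card_coe_set_eq, hker]
  exact (ncard_setOf_eval_eq_zero_le (sum_X_pow_two_pow_ne_zero hn)).trans
    (natDegree_sum_X_pow_two_pow_le n)

theorem range_hATHom_subset (hn : n ≠ 0) :
    ((hATHom n).range : Set (𝔽 n)) ⊆ {v | (v ^ 2 ^ n + v) * (v ^ 2 ^ n + v + 1) = 0} := by
  rintro _ ⟨y, rfl⟩
  change (hAT n y ^ 2 ^ n + hAT n y) * (hAT n y ^ 2 ^ n + hAT n y + 1) = 0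
  have hfrob : (hAT n y ^ 2 ^ n + hAT n y) * (hAT n y ^ 2 ^ n + hAT n y + 1)
      = (hAT n y ^ 2 + hAT n y) ^ 2 ^ n + (hAT n y ^ 2 + hAT n y) := by
    rw [add_pow_char_pow, pow_right_comm _ 2 (2 ^ n)]
    grind
  rw [hfrob, hAT_sq_add_hAT, pow_two_pow_add_self_pow hn, CharTwo.add_self_eq_zero]

theorem ncard_trace_mul_trace_add_one_le (hn : n ≠ 0) :
    {v : 𝔽 n | (v ^ 2 ^ n + v) * (v ^ 2 ^ n + v + 1) = 0}.ncard ≤ 2 ^ (n + 1) := by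
  set T : (𝔽 n)[X] := X ^ 2 ^ n + X
  have hT : T.natDegree = 2 ^ n := natDegree_X_pow_add_X (Nat.one_lt_two_pow hn)
  have hT0 : T ≠ 0 := ne_zero_of_natDegree_gt (hT ▸ Nat.one_lt_two_pow hn)
  have hT1 : T + C 1 ≠ 0 :=
    ne_zero_of_natDegree_gt (by rw [natDegree_add_C, hT]; exact Nat.one_lt_two_pow hn)
  have hroots : {v : 𝔽 n | (v ^ 2 ^ n + v) * (v ^ 2 ^ n + v + 1) = 0}
      = {v | (T * (T + C 1)).eval v = 0} := by
    simp [T]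
  rw [hroots]
  calc _ ≤ (T * (T + C 1)).natDegree := ncard_setOf_eval_eq_zero_le (mul_ne_zero hT0 hT1)
    _ = 2 ^ (n + 1) := by rw [natDegree_mul hT0 hT1, natDegree_add_C, hT, pow_succ, mul_two]

theorem card_ker_hATHom_and_card_range_hATHom (hn : n ≠ 0) :
    Nat.card (hATHom n).ker = 2 ^ (n - 1) ∧ Nat.card (hATHom n).range = 2 ^ (n + 1) := by
  have hrange : Nat.card (hATHom n).range ≤ 2 ^ (n + 1) := by
    rw [← SetLike.coe_sort_coe, Nat.card_coe_set_eq]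
    exact (Set.ncard_le_ncard (range_hATHom_subset hn) (Set.toFinite _)).trans
      (ncard_trace_mul_trace_add_one_le hn)
  refine (mul_eq_mul_iff_eq_and_eq_of_pos (card_ker_hATHom_le hn) hrange Nat.card_pos
    (by positivity)).mp ?_
  rw [← AddSubgroup.index_ker, AddSubgroup.card_mul_index, GaloisField.card 2 _ (by omega),
    ← pow_add]
  congr 1
  omega

theorem mem_range_hAT_of_pow_eq_self (hn : n ≠ 0) {v : 𝔽 n} (hv : v ^ 2 ^ n = v) :
    v ∈ Set.range (hAT n) := by
  have hrange : ((hATHom n).range : Set (𝔽 n)) = {v | (v ^ 2 ^ n + v) * (v ^ 2 ^ n + v + 1) = 0} :=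
    Set.eq_of_subset_of_ncard_le (range_hATHom_subset hn) <| by
      rw [← Nat.card_coe_set_eq ((hATHom n).range : Set (𝔽 n)), SetLike.coe_sort_coe,
        (card_ker_hATHom_and_card_range_hATHom hn).2]
      exact ncard_trace_mul_trace_add_one_le hn
  change v ∈ ((hATHom n).range : Set (𝔽 n))
  rw [hrange, Set.mem_ofPred_eq, hv, CharTwo.add_self_eq_zero, zero_mul]

theorem card_hAT_fiber (hn : n ≠ 0) {v : 𝔽 n} (hv : v ^ 2 ^ n = v) :
    Nat.card {c : 𝔽 n // v = hAT n c} = 2 ^ (n - 1) := by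
  obtain ⟨c₀, rfl⟩ := mem_range_hAT_of_pow_eq_self hn hv
  calc Nat.card {c : 𝔽 n // hAT n c₀ = hAT n c}
      = Nat.card (hATHom n ⁻¹' {hATHom n c₀}) :=
        Nat.card_congr (Equiv.subtypeEquivRight fun _ => eq_comm)
    _ = Nat.card (hATHom n).ker := Nat.card_congr ((hATHom n).fiberEquivKer c₀)
    _ = 2 ^ (n - 1) := (card_ker_hATHom_and_card_range_hATHom hn).1

theorem card_pow_two_pow_add_one_eq_hAT (hn : n ≠ 0) :
    Nat.card {p : 𝔽 n × 𝔽 n // p.1 ^ (2 ^ n + 1) = hAT n p.2} = 2 ^ (2 * n) * 2 ^ (n - 1) := by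
  let := Fintype.ofFinite (𝔽 n)
  rw [Nat.card_congr (Equiv.subtypeProdEquivSigmaSubtype fun b c => b ^ (2 ^ n + 1) = hAT n c),
    Nat.card_sigma]
  simp only [card_hAT_fiber hn (pow_two_pow_add_one_pow hn _), sum_const, card_univ, smul_eq_mul,
    ← Nat.card_eq_fintype_card, GaloisField.card 2 _ (by omega : 2 * n ≠ 0)]

theorem mulG_conj {a b c a' b' c' β γ : 𝔽 n} (hinv : mulG n (a, b, c) (a', b', c') = (1, 0, 0))
    (ha' : a' ^ (2 ^ n + 1) = 1) :
    mulG n (mulG n (a, b, c) (1, β, γ)) (a', b', c') =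
      (1, a' * β, γ + ((β * b ^ 2 ^ n + b * β ^ 2 ^ n) ^ 2 + (β * b ^ 2 ^ n + b * β ^ 2 ^ n))) := by
  simp only [mulG, Prod.mk.injEq] at hinv ⊢
  obtain ⟨ha, hb, hc⟩ := hinv
  obtain rfl : b' = a' * b := by grind
  have e : a' * (a' * b) ^ 2 ^ n = b ^ 2 ^ n := by
    rw [mul_pow, ← mul_assoc, ← pow_succ', ha', one_mul]
  exact ⟨by rwa [one_mul], by grind, by grind⟩

theorem inG_mulG_conj (hn : n ≠ 0) {a b c a' b' c' β γ : 𝔽 n} (ht : inG n (1, β, γ))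
    (hinv : mulG n (a, b, c) (a', b', c') = (1, 0, 0)) (ha' : a' ^ (2 ^ n + 1) = 1) :
    inG n (mulG n (mulG n (a, b, c) (1, β, γ)) (a', b', c')) := by
  set W := β * b ^ 2 ^ n + b * β ^ 2 ^ n
  have hW : W ^ 2 ^ n = W := by
    rw [add_pow_char_pow, mul_pow, mul_pow, pow_two_pow_pow_two_pow hn, pow_two_pow_pow_two_pow hn]
    ring
  rw [mulG_conj hinv ha']
  refine ⟨one_pow _, ?_⟩
  change (a' * β) ^ (2 ^ n + 1) = hAT n (γ + (W ^ 2 + W))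
  rw [mul_pow, ha', one_mul, ht.2, hAT_add, hAT_sq_add_self, hW, CharTwo.add_self_eq_zero,
    add_zero]

theorem card_inG_fst_eq_one :
    Nat.card {t : 𝔽 n × 𝔽 n × 𝔽 n | inG n t ∧ t.1 = 1} =
      Nat.card {p : 𝔽 n × 𝔽 n // p.1 ^ (2 ^ n + 1) = hAT n p.2} :=
  Nat.card_congr
    { toFun := fun t => ⟨t.1.2, t.2.1.2⟩
      invFun := fun p => ⟨(1, p.1), ⟨one_pow _, p.2⟩, rfl⟩
      left_inv := by rintro ⟨⟨a, b, c⟩, -, ha : a = 1⟩; subst ha; rfl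
      right_inv := fun _ => rfl }

theorem stmt8 (n : ℕ) (hn : 2 ≤ n) :
    (∀ t₂ t₁, inG n t₂ → inG n t₁ → (mulG n t₂ t₁).1 = t₂.1 * t₁.1) ∧
    (∀ a : GaloisField 2 (2*n), a ^ (2 ^ n + 1) = 1 →
      ∃ b c : GaloisField 2 (2*n), inG n (a, b, c)) ∧
    Nat.card {t : GaloisField 2 (2*n) × GaloisField 2 (2*n) × GaloisField 2 (2*n) |
        inG n t ∧ t.1 = 1} = (2 ^ n) ^ 3 / 2 ∧
    (∀ g t g', inG n g → inG n t → t.1 = 1 → inG n g' →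
      mulG n g g' = (1, 0, 0) → mulG n g' g = (1, 0, 0) →
      inG n (mulG n (mulG n g t) g') ∧ (mulG n (mulG n g t) g').1 = 1) := by
  have hn0 : n ≠ 0 := by omega
  refine ⟨fun _ _ _ _ => mul_comm _ _, fun a ha => ⟨0, 0, ha, ?_⟩, ?_, ?_⟩
  · simp [hAT_zero]
  · rw [card_inG_fst_eq_one, card_pow_two_pow_add_one_eq_hAT hn0]
    have hcube : (2 ^ n) ^ 3 = 2 ^ (2 * n) * 2 ^ (n - 1) * 2 := by
      rw [← pow_mul, ← pow_add, ← pow_succ]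
      congr 1
      omega
    rw [hcube, Nat.mul_div_cancel _ two_pos]
  · rintro ⟨a, b, c⟩ ⟨_, β, γ⟩ ⟨a', b', c'⟩ - ht rfl hg' hinv -
    exact ⟨inG_mulG_conj hn0 ht hinv hg'.1, by rw [mulG_conj hinv hg'.1]⟩
end

section
/- Let $q = 2^n$ with $n \geq 2$ and $h(y) = y^{q/2} + \cdots + y$. Expanding $(ax+b)^{q+1} = h(y + (ab^q)^2 x^2 + ab^q x + c)$ using $x^{q+1} = h(y)$, one has the polynomial identity in $\mathbb{F}_{q^2}[x,y]/(x^{q+1} - h(y))$: if $a^{q+1} = 1$ and $b^{q+1} = h(c)$, then $(ax+b)^{q+1} = h\big(y + (ab^q)^2 x^2 + ab^q x + c\big)$. -/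
open Finset

section FrobeniusSum

variable {R : Type*} [CommRing R]

def frobeniusSum (n : ℕ) (y : R) : R := ∑ i ∈ range n, y ^ 2 ^ i

lemma map_frobeniusSum {S : Type*} [CommRing S] (f : R →+* S) (n : ℕ) (y : R) :
    f (frobeniusSum n y) = frobeniusSum n (f y) := by
  simp only [frobeniusSum, map_sum, map_pow]

variable [CharP R 2]

lemma frobeniusSum_add (n : ℕ) (u v : R) :
    frobeniusSum n (u + v) = frobeniusSum n u + frobeniusSum n v := by
  simp only [frobeniusSum, add_pow_char_pow, sum_add_distrib]

lemma frobeniusSum_sq_add_self (n : ℕ) (z : R) :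
    frobeniusSum n (z ^ 2 + z) = z ^ 2 ^ n + z := by
  induction n with
  | zero => simp [frobeniusSum, CharTwo.add_self_eq_zero]
  | succ n ih =>
    rw [frobeniusSum, sum_range_succ, ← frobeniusSum, ih, add_pow_char_pow, ← pow_mul,
      ← pow_succ']
    linear_combination CharTwo.add_self_eq_zero (z ^ 2 ^ n)

theorem add_pow_two_pow_add_one_eq_frobeniusSum {n : ℕ} {α β γ x y : R}
    (hα : α ^ (2 ^ n + 1) = 1) (hβ : β ^ (2 ^ n + 1) = frobeniusSum n γ)
    (hβ_frob : (β ^ 2 ^ n) ^ 2 ^ n = β) (hxy : x ^ (2 ^ n + 1) = frobeniusSum n y) :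
    (α * x + β) ^ (2 ^ n + 1) =
      frobeniusSum n (y + (α * β ^ 2 ^ n) ^ 2 * x ^ 2 + α * β ^ 2 ^ n * x + γ) := by
  set w := α * β ^ 2 ^ n
  have hw : (w * x) ^ 2 ^ n = α ^ 2 ^ n * β * x ^ 2 ^ n := by
    rw [mul_pow, mul_pow, hβ_frob]
  rw [show y + w ^ 2 * x ^ 2 + w * x + γ = y + ((w * x) ^ 2 + w * x) + γ by ring,
    frobeniusSum_add, frobeniusSum_add, frobeniusSum_sq_add_self, ← hxy, ← hβ, hw,
    pow_succ, add_pow_char_pow, mul_pow]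
  linear_combination (x ^ 2 ^ n * x) * hα

end FrobeniusSum

theorem stmt12 (n : ℕ) (hn : 2 ≤ n) (A : Type*) [CommRing A]
    [Algebra (GaloisField 2 (2*n)) A]
    (a b c : GaloisField 2 (2*n)) (ha : a ^ (2 ^ n + 1) = 1)
    (hbc : b ^ (2 ^ n + 1) = hAT n c)
    (x y : A) (hxy : x ^ (2 ^ n + 1) = ∑ i ∈ Finset.range n, y ^ (2 ^ i)) :
    (algebraMap (GaloisField 2 (2*n)) A a * x + algebraMap (GaloisField 2 (2*n)) A b)
        ^ (2 ^ n + 1)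
      = ∑ i ∈ Finset.range n,
          (y + algebraMap (GaloisField 2 (2*n)) A ((a * b ^ (2 ^ n)) ^ 2) * x ^ 2
             + algebraMap (GaloisField 2 (2*n)) A (a * b ^ (2 ^ n)) * x
             + algebraMap (GaloisField 2 (2*n)) A c) ^ (2 ^ i) := by
  nontriviality A
  have : CharP A 2 := charP_of_injective_algebraMap' (GaloisField 2 (2*n)) 2
  have : Fintype (GaloisField 2 (2*n)) := Fintype.ofFinite _
  have hb_frob : (b ^ 2 ^ n) ^ 2 ^ n = b := by
    calc (b ^ 2 ^ n) ^ 2 ^ n = b ^ Nat.card (GaloisField 2 (2*n)) := by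
          rw [GaloisField.card 2 (2*n) (by omega), ← pow_mul, ← pow_add, ← two_mul]
      _ = b := by rw [Nat.card_eq_fintype_card, FiniteField.pow_card]
  simp only [map_pow, map_mul]
  refine add_pow_two_pow_add_one_eq_frobeniusSum ?_ ?_ ?_ hxy
  · rw [← map_pow, ha, map_one]
  · rw [← map_pow, hbc, ← map_frobeniusSum]
    rfl
  · rw [← map_pow, ← map_pow, hb_frob]
end
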